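/- Let P be an algebra and a right C-comodule with coaction Δ_P(p) = p₍₀₎ ⊗ p₍₁₎. Then the C-extension P^{coC} ⊆ P is coalgebra-Galois if and only if the induced right action of A := (C*)^{op} on P, given by p ◁ a := p₍₀₎ a(p₍₁₎), is a Galois action. -/

import Mathlib

/-!
STATEMENT 7. For an algebra and right C-comodule P, the C-extension
P^{coC} ⊆ P is coalgebra-Galois iff the induced right action of (C*)^op on P,
p ◁ f = p₍₀₎ f(p₍₁₎), is a Galois action.
-/

open TensorProduct LinearMap

noncomputable section

namespace CGal

variable {k : Type*} [Field k]
variable {P : Type*} [Ring P] [Algebra k P]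

section Action

variable {A : Type*} [AddCommGroup A] [Module k A]
variable (act : P →ₗ[k] A →ₗ[k] P)

/-- The invariant subalgebra `P^A`. -/
def actInv : Set P :=
  {b : P | ∀ (p : P) (a : A), act (b * p) a = b * act p a}

/-- The kernel of `P ⊗ P → P ⊗_{P^A} P`. -/
def actRel : Submodule k (P ⊗[k] P) :=
  Submodule.span k
    {x | ∃ p b p', b ∈ actInv act ∧ x = (p * b) ⊗ₜ[k] p' - p ⊗ₜ[k] (b * p')}

/-- Evaluation of the canonical map: `Can(p ⊗ p')(a) = p (p' ◁ a)`. -/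
def CanApply (a : A) : P ⊗[k] P →ₗ[k] P :=
  TensorProduct.lift ((LinearMap.mul k P).compl₂ (act.flip a))

/-- The canonical map `Can : P ⊗ P → Hom(A, P)` (lifted to `P ⊗ P`). -/
def CanHom : P ⊗[k] P →ₗ[k] (A →ₗ[k] P) :=
  TensorProduct.lift
    (LinearMap.mk₂ k (fun p p' => (LinearMap.mul k P p) ∘ₗ (act p'))
      (fun p₁ p₂ p' => by ext a; simp [add_mul])
      (fun c p p' => by ext a; simp [smul_mul_assoc])
      (fun p p₁' p₂' => by ext a; simp [mul_add])
      (fun c p p' => by ext a; simp))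

/-- The (right) action `act` of `A` on `P` is Galois. -/
def IsGaloisAction : Prop :=
  (∀ x : P ⊗[k] P, (∀ a : A, CanApply act a x = 0) ↔ x ∈ actRel act) ∧
  ∃ V : Submodule k (A →ₗ[k] k),
    (LinearMap.range (CanHom act)
        = Submodule.span k
            {f : A →ₗ[k] P | ∃ (p : P) (v : A →ₗ[k] k), v ∈ V ∧ f = v.smulRight p}) ∧
    (∀ a : A, (∀ v ∈ V, v a = 0) → a = 0)

end Action

variable {C : Type*} [AddCommGroup C] [Module k C] [Coalgebra k C]

/-- The coaction invariants `P^{coC}`. -/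
def coinv (δ : P →ₗ[k] P ⊗[k] C) : Set P :=
  {b : P | ∀ p : P, δ (b * p) = b • δ p}

/-- `δ` is a (counital, coassociative) right `C`-coaction on `P`. -/
def IsCoaction (δ : P →ₗ[k] P ⊗[k] C) : Prop :=
  (∀ p : P, (TensorProduct.rid k P) ((lTensor P (Coalgebra.counit : C →ₗ[k] k)) (δ p)) = p) ∧
  (∀ p : P, (rTensor C δ) (δ p)
      = (TensorProduct.assoc k P C C).symm
          ((lTensor P (Coalgebra.comul : C →ₗ[k] C ⊗[k] C)) (δ p)))

/-- The kernel of `P ⊗ P → P ⊗_B P` for `B = P^{coC}`. -/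
def galRel (δ : P →ₗ[k] P ⊗[k] C) : Submodule k (P ⊗[k] P) :=
  Submodule.span k
    {x | ∃ p b p', b ∈ coinv δ ∧ x = (p * b) ⊗ₜ[k] p' - p ⊗ₜ[k] (b * p')}

/-- The lifted canonical map `~can : P ⊗ P → P ⊗ C`. -/
def canLift (δ : P →ₗ[k] P ⊗[k] C) : P ⊗[k] P →ₗ[k] P ⊗[k] C :=
  (TensorProduct.map (LinearMap.mul' k P) LinearMap.id)
    ∘ₗ (TensorProduct.assoc k P P C).symm.toLinearMap
    ∘ₗ (lTensor P δ)

/-- The extension `P^{coC} ⊆ P` is coalgebra-Galois. -/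
def IsCGalois (δ : P →ₗ[k] P ⊗[k] C) : Prop :=
  Function.Surjective (canLift δ) ∧ LinearMap.ker (canLift δ) = galRel δ

/-- The action of `(C*)^{op}` on `P` induced by the coaction:
`p ◁ f = p₍₀₎ f(p₍₁₎)`. -/
def inducedAct (δ : P →ₗ[k] P ⊗[k] C) : P →ₗ[k] (C →ₗ[k] k) →ₗ[k] P :=
  LinearMap.mk₂ k
    (fun p f => (TensorProduct.rid k P) ((lTensor P f) (δ p)))
    (fun p₁ p₂ f => by simp [map_add])
    (fun c p f => by simp [map_smul])
    (fun p f₁ f₂ => by simp [LinearMap.lTensor_add, LinearMap.add_apply, map_add])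
    (fun c p f => by simp [LinearMap.lTensor_smul, LinearMap.smul_apply, map_smul])

/-!
Evaluation `P ⊗ C → Hom(C*, P)`, `p ⊗ c ↦ (f ↦ f(c) p)`, is injective over a field and carries
`can` to `Can`; it also identifies `P^{coC}` with `P^A`. Hence injectivity of `Can` on
`P ⊗_{P^A} P` is injectivity of `can`. For surjectivity: the image of `P ⊗ C` is `j(P ⊗ V)` for
the separating space `V ⊆ C**` of evaluations at elements of `C`; conversely, if `j(P ⊗ V)` lies
in that image, then `V` consists of evaluations, at elements that span `C` because `V`
separates, so `j(P ⊗ V)` is the whole image and `can` is onto.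
-/

lemma CanApply_apply {A : Type*} [AddCommGroup A] [Module k A] (act : P →ₗ[k] A →ₗ[k] P)
    (a : A) (x : P ⊗[k] P) :
    CanApply act a x = CanHom act x a := by
  induction x using TensorProduct.induction_on with
  | zero => simp
  | tmul p p' => rfl
  | add x y hx hy => simp [hx, hy]

section Evaluation

variable {M E : Type*} [AddCommGroup M] [Module k M] [AddCommGroup E] [Module k E]

/-- `m ⊗ e ↦ (f ↦ f e • m)`, which identifies `M ⊗ E` with a subspace of `Hom(E*, M)`. -/
def evalTensor : M ⊗[k] E →ₗ[k] (Module.Dual k E →ₗ[k] M) :=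
  TensorProduct.lift (smulRightₗ ∘ₗ Module.Dual.eval k E).flip

@[simp] lemma evalTensor_tmul (m : M) (e : E) :
    evalTensor (m ⊗ₜ[k] e) = (Module.Dual.eval k E e).smulRight m := rfl

lemma evalTensor_apply (x : M ⊗[k] E) (f : Module.Dual k E) :
    evalTensor x f = TensorProduct.rid k M (lTensor M f x) := by
  induction x using TensorProduct.induction_on with
  | zero => simp
  | tmul m e => simp
  | add x y hx hy => simp [hx, hy]

lemma evalTensor_injective : Function.Injective (evalTensor (k := k) (M := M) (E := E)) := by
  classical
  let b := Module.Basis.ofVectorSpace k E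
  -- the `i`-th coordinate of `x` along `b` is `evalTensor x (b.coord i)`
  let coords : M ⊗[k] E ≃ₗ[k] (Module.Basis.ofVectorSpaceIndex k E →₀ M) :=
    (LinearEquiv.lTensor M b.repr).trans (TensorProduct.finsuppScalarRight k k M _)
  have coords_apply : ∀ x i, coords x i = evalTensor x (b.coord i) := by
    intro x i
    induction x using TensorProduct.induction_on with
    | zero => simp
    | tmul m e =>
        change TensorProduct.finsuppScalarRight k k M _ (m ⊗ₜ[k] b.repr e) i = _
        simp [TensorProduct.finsuppScalarRight_apply_tmul_apply, Module.Basis.coord_apply]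
    | add x y hx hy => simp [hx, hy]
  intro x y hxy
  apply coords.injective
  ext i
  rw [coords_apply, coords_apply, hxy]

/-- The subspace `j(M ⊗ V)` of condition (ii) of a Galois action. -/
def smulRightSpan (M : Type*) [AddCommGroup M] [Module k M] {A : Type*} [AddCommGroup A]
    [Module k A] (V : Submodule k (Module.Dual k A)) : Submodule k (A →ₗ[k] M) :=
  Submodule.span k {f | ∃ (m : M) (v : Module.Dual k A), v ∈ V ∧ f = v.smulRight m}

lemma smulRightSpan_le_range_evalTensor {V : Submodule k (Module.Dual k (Module.Dual k E))}
    (hV : V ≤ range (Module.Dual.eval k E)) :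
    smulRightSpan M V ≤ range (evalTensor (M := M) (E := E)) := by
  refine Submodule.span_le.mpr ?_
  rintro _ ⟨m, v, hv, rfl⟩
  obtain ⟨e, rfl⟩ := hV hv
  exact ⟨m ⊗ₜ[k] e, rfl⟩

lemma range_evalTensor_le_smulRightSpan {V : Submodule k (Module.Dual k (Module.Dual k E))}
    (hV : Submodule.span k {e | Module.Dual.eval k E e ∈ V} = ⊤) :
    range (evalTensor (M := M) (E := E)) ≤ smulRightSpan M V := by
  rw [range_eq_map, ← TensorProduct.span_tmul_eq_top, Submodule.map_span, Submodule.span_le]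
  rintro _ ⟨_, ⟨m, e, rfl⟩, rfl⟩
  let evalTensorLeft : E →ₗ[k] Module.Dual k E →ₗ[k] M := evalTensor ∘ₗ TensorProduct.mk k M E m
  have hE : e ∈ Submodule.span k {e | Module.Dual.eval k E e ∈ V} := hV ▸ Submodule.mem_top
  have : Submodule.map evalTensorLeft (Submodule.span k {e | Module.Dual.eval k E e ∈ V})
      ≤ smulRightSpan M V := by
    rw [Submodule.map_span, Submodule.span_le]
    rintro _ ⟨d, hd, rfl⟩
    exact Submodule.subset_span ⟨m, _, hd, rfl⟩
  exact this ⟨e, hE, rfl⟩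

lemma range_evalTensor_eq_smulRightSpan :
    range (evalTensor (M := M) (E := E)) = smulRightSpan M (range (Module.Dual.eval k E)) :=
  le_antisymm
    (range_evalTensor_le_smulRightSpan (by simp [Submodule.span_univ]))
    (smulRightSpan_le_range_evalTensor le_rfl)

/-- If `v.smulRight m = evalTensor z` with `m ≠ 0`, then `v` is evaluation at the image of `z`
under `λ ⊗ id : M ⊗ E → E` for a functional `λ` with `λ m = 1`. -/
lemma le_range_eval_of_smulRightSpan_le [Nontrivial M]
    {V : Submodule k (Module.Dual k (Module.Dual k E))}
    (hV : smulRightSpan M V ≤ range (evalTensor (M := M) (E := E))) :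
    V ≤ range (Module.Dual.eval k E) := by
  intro v hv
  obtain ⟨m, hm⟩ := exists_ne (0 : M)
  obtain ⟨lam, hlam⟩ := Module.Projective.exists_dual_eq_one k hm
  have lam_evalTensor (z : M ⊗[k] E) (f : Module.Dual k E) :
      f (TensorProduct.lid k E (rTensor E lam z)) = lam (evalTensor z f) := by
    induction z using TensorProduct.induction_on with
    | zero => simp
    | tmul n e => simp [mul_comm]
    | add x y hx hy => simp [hx, hy]
  obtain ⟨z, hz⟩ := hV (Submodule.subset_span ⟨m, v, hv, rfl⟩)
  refine ⟨TensorProduct.lid k E (rTensor E lam z), LinearMap.ext fun f => ?_⟩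
  rw [Module.Dual.eval_apply, lam_evalTensor, hz, smulRight_apply, map_smul, hlam, smul_eq_mul,
    mul_one]

lemma span_eval_preimage_eq_top {V : Submodule k (Module.Dual k (Module.Dual k E))}
    (hV : V ≤ range (Module.Dual.eval k E)) (hsep : ∀ f, (∀ v ∈ V, v f = 0) → f = 0) :
    Submodule.span k {e | Module.Dual.eval k E e ∈ V} = ⊤ := by
  rw [← Submodule.dualAnnihilator_eq_bot_iff, Submodule.eq_bot_iff]
  intro f hf
  refine hsep f fun v hv => ?_
  obtain ⟨e, rfl⟩ := hV hv
  exact (Submodule.mem_dualAnnihilator f).mp hf e (Submodule.subset_span hv)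

lemma surjective_iff_exists_range_evalTensor_comp {N : Type*} [AddCommGroup N] [Module k N]
    (g : N →ₗ[k] M ⊗[k] E) :
    Function.Surjective g ↔ ∃ V : Submodule k (Module.Dual k (Module.Dual k E)),
      range (evalTensor ∘ₗ g) = smulRightSpan M V ∧ ∀ f, (∀ v ∈ V, v f = 0) → f = 0 := by
  constructor
  · intro hg
    refine ⟨range (Module.Dual.eval k E), ?_, fun f hf => ?_⟩
    · rw [range_comp, range_eq_top.mpr hg, ← range_eq_map, range_evalTensor_eq_smulRightSpan]
    · ext e
      exact hf _ ⟨e, rfl⟩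
  · rintro ⟨V, hV, hsep⟩
    rcases subsingleton_or_nontrivial M with hM | hM
    · have : Subsingleton (M ⊗[k] E) := evalTensor_injective.subsingleton
      exact fun x => ⟨0, Subsingleton.elim _ _⟩
    have hVeval : V ≤ range (Module.Dual.eval k E) :=
      le_range_eval_of_smulRightSpan_le (hV ▸ range_comp_le_range g evalTensor)
    intro x
    obtain ⟨y, hy⟩ : evalTensor x ∈ range (evalTensor ∘ₗ g) :=
      hV ▸ range_evalTensor_le_smulRightSpan (span_eval_preimage_eq_top hVeval hsep) ⟨x, rfl⟩
    exact ⟨y, evalTensor_injective hy⟩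

lemma evalTensor_smul (b : P) (x : P ⊗[k] E) (f : Module.Dual k E) :
    evalTensor (b • x) f = b * evalTensor x f := by
  induction x using TensorProduct.induction_on with
  | zero => simp
  | tmul p e => simp [TensorProduct.smul_tmul']
  | add x y hx hy => simp [hx, hy, mul_add]

variable (δ : P →ₗ[k] P ⊗[k] E)

lemma inducedAct_apply (p : P) (f : Module.Dual k E) :
    inducedAct δ p f = evalTensor (δ p) f :=
  (evalTensor_apply _ _).symm

lemma canLift_tmul (p p' : P) : canLift δ (p ⊗ₜ[k] p') = p • δ p' := by
  simp only [canLift, coe_comp, LinearEquiv.coe_coe, Function.comp_apply, lTensor_tmul]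
  induction δ p' using TensorProduct.induction_on with
  | zero => simp
  | tmul q c => simp [TensorProduct.smul_tmul']
  | add x y hx hy => simp [tmul_add, hx, hy]

lemma evalTensor_comp_canLift : evalTensor ∘ₗ canLift δ = CanHom (inducedAct δ) := by
  refine TensorProduct.ext' fun p p' => LinearMap.ext fun f => ?_
  rw [coe_comp, Function.comp_apply, canLift_tmul, evalTensor_smul, ← inducedAct_apply]
  rfl

lemma canLift_eq_zero_iff (x : P ⊗[k] P) :
    canLift δ x = 0 ↔ ∀ f, CanApply (inducedAct δ) f x = 0 := by
  simp only [CanApply_apply, ← evalTensor_comp_canLift, coe_comp, Function.comp_apply]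
  rw [← map_eq_zero_iff _ evalTensor_injective, LinearMap.ext_iff]
  rfl

lemma actInv_inducedAct : actInv (inducedAct δ) = coinv δ := by
  ext b
  simp only [actInv, coinv, Set.mem_ofPred_eq, inducedAct_apply, ← evalTensor_smul,
    ← LinearMap.ext_iff, evalTensor_injective.eq_iff]

lemma actRel_inducedAct : actRel (inducedAct δ) = galRel δ := by
  rw [actRel, galRel, actInv_inducedAct]

end Evaluation

theorem cgalois_iff_induced_action_galois_general
    (δ : P →ₗ[k] P ⊗[k] C) :
    IsCGalois δ ↔ IsGaloisAction (inducedAct δ) := by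
  have ker_iff : (∀ x, (∀ f, CanApply (inducedAct δ) f x = 0) ↔ x ∈ actRel (inducedAct δ)) ↔
      ker (canLift δ) = galRel δ := by
    simp only [← canLift_eq_zero_iff, actRel_inducedAct, SetLike.ext_iff, mem_ker]
  have surjective_iff := surjective_iff_exists_range_evalTensor_comp (canLift δ)
  rw [evalTensor_comp_canLift] at surjective_iff
  rw [IsCGalois, IsGaloisAction, ker_iff, surjective_iff]
  exact and_comm

theorem cgalois_iff_induced_action_galois
    (δ : P →ₗ[k] P ⊗[k] C) (hδ : IsCoaction δ) :
    IsCGalois δ ↔ IsGaloisAction (inducedAct δ) :=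
  cgalois_iff_induced_action_galois_general δ

end CGal
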